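/- arXiv:1306.3712 — 2 statements merged into one kernel-verified Lean document; each statement's English description precedes it below -/
import Mathlib

section
/- Let n ≥ 1, let K = ℂ(q) be the field of rational functions in one variable q over ℂ, and let A be an associative unital K-algebra. Suppose given elements a_i(l) ∈ A for i ∈ {1,…,n} and nonzero integers l, satisfying the level-one quantum Heisenberg relations: a_i(r)·a_j(s) − a_j(s)·a_i(r) = δ_{r+s,0} · ((1/r)·[a_{ij}·r]·[r]) · 1_A for all i,j ∈ {1,…,n} and all nonzero integers r,s. For i ∈ {1,…,n} and nonzero l ∈ ℤ define a_i^*(l) = Σ_{p=1}^{n} ( [min(p,i)·l]·[(n+1−max(p,i))·l] / ([(n+1)·l]·[l]) ) · a_p(l) (the denominators [(n+1)l] and [l] are nonzero in K). Then for all i,j ∈ {1,…,n} and all nonzero integers l,k: a_i^*(l)·a_j(k) − a_j(k)·a_i^*(l) = δ_{ij}·δ_{l+k,0}·((1/l)·[l]²)·1_A. -/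
/-- The `q`-integer `[m] = (q^m - q^{-m})/(q - q^{-1})` in `K = ℂ(q)`,
where `q = RatFunc.X`. -/
noncomputable def qint (m : ℤ) : RatFunc ℂ :=
  ((RatFunc.X : RatFunc ℂ) ^ m - (RatFunc.X : RatFunc ℂ) ^ (-m)) /
    ((RatFunc.X : RatFunc ℂ) - (RatFunc.X : RatFunc ℂ)⁻¹)

/-- The Cartan matrix of type `A_n`: `a_{ij} = 2` if `i = j`, `-1` if `|i-j| = 1`,
`0` otherwise (for indices `i, j ∈ {1, …, n}`). -/
def cartanA (i j : ℕ) : ℤ :=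
  if i = j then 2 else if i + 1 = j ∨ j + 1 = i then -1 else 0

/-- The element `a_i^*(l) = Σ_{p=1}^{n} ([min(p,i)l]·[(n+1−max(p,i))l] / ([(n+1)l]·[l])) · a_p(l)`. -/
noncomputable def astar {A : Type*} [Ring A] [Algebra (RatFunc ℂ) A]
    (n : ℕ) (a : ℕ → ℤ → A) (i : ℕ) (l : ℤ) : A :=
  ∑ p ∈ Finset.Icc 1 n,
    (qint ((min p i : ℤ) * l) * qint (((n : ℤ) + 1 - (max p i : ℤ)) * l) /
      (qint (((n : ℤ) + 1) * l) * qint l)) • a p l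

lemma hX : (RatFunc.X : RatFunc ℂ) ≠ 0 := RatFunc.X_ne_zero

lemma Xpow_ne_one : ∀ c : ℤ, c ≠ 0 → (RatFunc.X : RatFunc ℂ) ^ c ≠ 1 := by
  have hnat : ∀ m : ℕ, m ≠ 0 → (RatFunc.X : RatFunc ℂ) ^ m ≠ 1 := by
    intro m hm h
    have : (algebraMap (Polynomial ℂ) (RatFunc ℂ)) (Polynomial.X ^ m) =
        algebraMap (Polynomial ℂ) (RatFunc ℂ) 1 := by
      simpa [map_pow, RatFunc.algebraMap_X] using h
    have h2 : (Polynomial.X : Polynomial ℂ) ^ m = 1 :=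
      IsFractionRing.injective (Polynomial ℂ) (RatFunc ℂ) this
    have := congrArg Polynomial.natDegree h2
    simp [Polynomial.natDegree_X_pow, hm] at this
  intro c hc h
  rcases lt_or_gt_of_ne hc with hneg | hpos
  · have h' : (RatFunc.X : RatFunc ℂ) ^ (-c) = 1 := by
      rw [zpow_neg, h, inv_one]
    have : (RatFunc.X : RatFunc ℂ) ^ ((-c).toNat) = 1 := by
      rw [← zpow_natCast, Int.toNat_of_nonneg (by omega)]; exact h'
    exact hnat _ (by omega) this
  · have : (RatFunc.X : RatFunc ℂ) ^ (c.toNat) = 1 := by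
      rw [← zpow_natCast, Int.toNat_of_nonneg (by omega)]; exact h
    exact hnat _ (by omega) this

lemma hd : (RatFunc.X : RatFunc ℂ) - (RatFunc.X : RatFunc ℂ)⁻¹ ≠ 0 := by
  intro h
  have h1 : (RatFunc.X : RatFunc ℂ) = (RatFunc.X : RatFunc ℂ)⁻¹ := sub_eq_zero.mp h
  have : (RatFunc.X : RatFunc ℂ) ^ (2:ℤ) = 1 := by
    rw [show (2:ℤ) = 1 + 1 from rfl, zpow_add₀ hX, zpow_one]
    nth_rewrite 2 [h1]
    exact mul_inv_cancel₀ hX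
  exact Xpow_ne_one 2 (by norm_num) this

lemma qint_ne_zero {m : ℤ} (hm : m ≠ 0) : qint m ≠ 0 := by
  unfold qint
  apply div_ne_zero _ hd
  intro h
  have h1 : (RatFunc.X : RatFunc ℂ) ^ m = (RatFunc.X : RatFunc ℂ) ^ (-m) := sub_eq_zero.mp h
  have : (RatFunc.X : RatFunc ℂ) ^ (m + m) = 1 := by
    rw [zpow_add₀ hX]
    nth_rewrite 2 [h1]
    rw [← zpow_add₀ hX]; simp
  exact Xpow_ne_one _ (by omega) this

lemma qint_zero' : qint 0 = 0 := by simp [qint]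

lemma qint_neg' (m : ℤ) : qint (-m) = - qint m := by
  unfold qint; rw [neg_neg, ← neg_div, neg_sub]

/-- The "symmetric" quantity `(q^m + q^{-m})/(q - q^{-1})^2`. -/
noncomputable def qq (m : ℤ) : RatFunc ℂ :=
  ((RatFunc.X : RatFunc ℂ) ^ m + (RatFunc.X : RatFunc ℂ) ^ (-m)) /
    (((RatFunc.X : RatFunc ℂ) - (RatFunc.X : RatFunc ℂ)⁻¹) *
     ((RatFunc.X : RatFunc ℂ) - (RatFunc.X : RatFunc ℂ)⁻¹))

lemma qq_neg (m : ℤ) : qq (-m) = qq m := by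
  unfold qq; rw [neg_neg, add_comm]

lemma qint_mul (a b : ℤ) : qint a * qint b = qq (a + b) - qq (a - b) := by
  unfold qint qq
  rw [div_mul_div_comm, div_sub_div_same]
  congr 1
  have h1 : ∀ c d : ℤ, (RatFunc.X : RatFunc ℂ) ^ (c + d) = RatFunc.X ^ c * RatFunc.X ^ d :=
    fun c d => zpow_add₀ hX c d
  rw [show (-(a+b)) = (-a) + (-b) from by ring, show (a - b) = a + (-b) from by ring,
    show (-(a + -b)) = (-a) + b from by ring, h1, h1, h1, h1]
  ring

lemma L1 (a l : ℤ) : qint (2*l) * qint (a*l) =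
    qint l * qint ((a-1)*l) + qint l * qint ((a+1)*l) := by
  have h1 := qint_mul (2*l) (a*l)
  have h2 := qint_mul l ((a-1)*l)
  have h3 := qint_mul l ((a+1)*l)
  rw [show 2*l + a*l = (a+2)*l from by ring, show 2*l - a*l = -((a-2)*l) from by ring, qq_neg] at h1
  rw [show l + (a-1)*l = a*l from by ring, show l - (a-1)*l = -((a-2)*l) from by ring, qq_neg] at h2
  rw [show l + (a+1)*l = (a+2)*l from by ring, show l - (a+1)*l = -(a*l) from by ring, qq_neg] at h3
  rw [h1, h2, h3]; ring

lemma L3 (a b l : ℤ) : qint ((a+1)*l) * qint (b*l) =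
    qint (a*l) * qint ((b-1)*l) + qint l * qint ((a+b)*l) := by
  have h1 := qint_mul ((a+1)*l) (b*l)
  have h2 := qint_mul (a*l) ((b-1)*l)
  have h3 := qint_mul l ((a+b)*l)
  rw [show (a+1)*l + b*l = (a+b+1)*l from by ring, show (a+1)*l - b*l = (a-b+1)*l from by ring] at h1
  rw [show a*l + (b-1)*l = (a+b-1)*l from by ring, show a*l - (b-1)*l = (a-b+1)*l from by ring] at h2
  rw [show l + (a+b)*l = (a+b+1)*l from by ring, show l - (a+b)*l = -((a+b-1)*l) from by ring, qq_neg] at h3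
  rw [h1, h2, h3]; ring

lemma L2 (a b l : ℤ) :
    qint (2*l) * qint (a*l) * qint (b*l) - qint l * qint ((a-1)*l) * qint (b*l)
      - qint l * qint (a*l) * qint ((b-1)*l) = qint l * qint l * qint ((a+b)*l) := by
  linear_combination qint (b*l) * L1 a l + qint l * L3 a b l

lemma core (n i j : ℕ) (hi : i ∈ Finset.Icc 1 n) (hj : j ∈ Finset.Icc 1 n) (l : ℤ) :
    ∑ p ∈ Finset.Icc 1 n,
      qint ((min p i : ℤ) * l) * qint (((n : ℤ) + 1 - (max p i : ℤ)) * l) *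
        qint (cartanA p j * l)
    = (if i = j then 1 else 0) * (qint (((n : ℤ) + 1) * l) * qint l * qint l) := by
  simp only [Finset.mem_Icc] at hi hj
  set g : ℕ → RatFunc ℂ := fun p =>
      qint ((min p i : ℤ) * l) * qint (((n : ℤ) + 1 - (max p i : ℤ)) * l) *
        qint (cartanA p j * l) with hg
  have step1 : ∑ p ∈ Finset.Icc 1 n, g p = ∑ p ∈ Finset.Icc 0 (n+1), g p := by
    apply Finset.sum_subset
    · intro x hx; simp only [Finset.mem_Icc] at *; omega
    · intro x hx hx'
      simp only [Finset.mem_Icc] at hx hx'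
      have hcase : x = 0 ∨ x = n + 1 := by omega
      rcases hcase with h | h <;> subst h <;> simp only [hg]
      · rw [show (((0:ℕ) : ℤ) ⊓ (i:ℤ)) = 0 from by omega, zero_mul, qint_zero']
        ring
      · rw [show ((((n+1):ℕ) : ℤ) ⊔ (i:ℤ)) = (n:ℤ) + 1 from by omega,
          show ((n:ℤ) + 1 - ((n:ℤ)+1)) * l = 0 from by ring, qint_zero']
        ring
  have step2 : ∑ p ∈ Finset.Icc 0 (n+1), g p = ∑ p ∈ ({j-1, j, j+1} : Finset ℕ), g p := by
    symm
    apply Finset.sum_subset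
    · intro x hx; simp only [Finset.mem_insert, Finset.mem_singleton] at hx
      simp only [Finset.mem_Icc]; omega
    · intro x hx hx'
      simp only [Finset.mem_Icc] at hx
      simp only [Finset.mem_insert, Finset.mem_singleton] at hx'
      have hc : cartanA x j = 0 := by
        unfold cartanA
        rw [if_neg (by omega), if_neg (by omega)]
      simp only [hg, hc, zero_mul, qint_zero', mul_zero]
  have hne1 : (j-1 : ℕ) ∉ ({j, j+1} : Finset ℕ) := by
    simp only [Finset.mem_insert, Finset.mem_singleton]; omega
  have hne2 : (j : ℕ) ∉ ({j+1} : Finset ℕ) := by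
    simp only [Finset.mem_singleton]; omega
  have step3 : ∑ p ∈ ({j-1, j, j+1} : Finset ℕ), g p = g (j-1) + g j + g (j+1) := by
    rw [Finset.sum_insert hne1, Finset.sum_insert hne2, Finset.sum_singleton]; ring
  rw [step1, step2, step3]
  have hcj1 : cartanA (j-1) j = -1 := by unfold cartanA; rw [if_neg (by omega), if_pos (by omega)]
  have hcj : cartanA j j = 2 := by unfold cartanA; rw [if_pos rfl]
  have hcj2 : cartanA (j+1) j = -1 := by unfold cartanA; rw [if_neg (by omega), if_pos (by omega)]
  simp only [hg, hcj1, hcj, hcj2]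
  rw [show (-1 : ℤ) * l = -l from by ring, qint_neg']
  rcases lt_trichotomy i j with hij | hij | hij
  · rw [if_neg (by omega)]
    rw [show (((j-1:ℕ)) : ℤ) ⊓ (i:ℤ) = (i:ℤ) from by omega,
        show (((j-1:ℕ)) : ℤ) ⊔ (i:ℤ) = (j:ℤ) - 1 from by omega,
        show ((j : ℤ) ⊓ (i:ℤ)) = (i:ℤ) from by omega,
        show ((j : ℤ) ⊔ (i:ℤ)) = (j:ℤ) from by omega,
        show (((j+1:ℕ)) : ℤ) ⊓ (i:ℤ) = (i:ℤ) from by omega,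
        show (((j+1:ℕ)) : ℤ) ⊔ (i:ℤ) = (j:ℤ) + 1 from by omega]
    set b : ℤ := (n : ℤ) + 1 - (j : ℤ) with hb
    rw [show (n:ℤ) + 1 - ((j:ℤ) - 1) = b + 1 from by rw [hb]; ring,
        show (n:ℤ) + 1 - ((j:ℤ) + 1) = b - 1 from by rw [hb]; ring]
    linear_combination qint ((i:ℤ)*l) * L1 b l
  · subst hij
    rw [if_pos rfl]
    rw [show (((i-1:ℕ)) : ℤ) ⊓ (i:ℤ) = (i:ℤ) - 1 from by omega,
        show (((i-1:ℕ)) : ℤ) ⊔ (i:ℤ) = (i:ℤ) from by omega,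
        show ((i : ℤ) ⊓ (i:ℤ)) = (i:ℤ) from by omega,
        show ((i : ℤ) ⊔ (i:ℤ)) = (i:ℤ) from by omega,
        show (((i+1:ℕ)) : ℤ) ⊓ (i:ℤ) = (i:ℤ) from by omega,
        show (((i+1:ℕ)) : ℤ) ⊔ (i:ℤ) = (i:ℤ) + 1 from by omega]
    set b : ℤ := (n : ℤ) + 1 - (i : ℤ) with hb
    rw [show (n:ℤ) + 1 - ((i:ℤ) + 1) = b - 1 from by rw [hb]; ring,
        show (n:ℤ) + 1 = (i:ℤ) + b from by rw [hb]; ring]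
    linear_combination L2 (i:ℤ) b l
  · rw [if_neg (by omega)]
    rw [show (((j-1:ℕ)) : ℤ) ⊓ (i:ℤ) = (j:ℤ) - 1 from by omega,
        show (((j-1:ℕ)) : ℤ) ⊔ (i:ℤ) = (i:ℤ) from by omega,
        show ((j : ℤ) ⊓ (i:ℤ)) = (j:ℤ) from by omega,
        show ((j : ℤ) ⊔ (i:ℤ)) = (i:ℤ) from by omega,
        show (((j+1:ℕ)) : ℤ) ⊓ (i:ℤ) = (j:ℤ) + 1 from by omega,
        show (((j+1:ℕ)) : ℤ) ⊔ (i:ℤ) = (i:ℤ) from by omega]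
    linear_combination qint (((n:ℤ) + 1 - (i:ℤ))*l) * L1 (j:ℤ) l

theorem astar_commutator_with_heisenberg
    (n : ℕ) (hn : 1 ≤ n) (A : Type*) [Ring A] [Algebra (RatFunc ℂ) A]
    (a : ℕ → ℤ → A)
    (hrel : ∀ i ∈ Finset.Icc 1 n, ∀ j ∈ Finset.Icc 1 n, ∀ r s : ℤ, r ≠ 0 → s ≠ 0 →
      a i r * a j s - a j s * a i r =
        (if r + s = 0 then (1 / (r : RatFunc ℂ)) * qint (cartanA i j * r) * qint r else 0)
          • (1 : A))
    (i : ℕ) (hi : i ∈ Finset.Icc 1 n) (j : ℕ) (hj : j ∈ Finset.Icc 1 n)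
    (l k : ℤ) (hl : l ≠ 0) (hk : k ≠ 0) :
    astar n a i l * a j k - a j k * astar n a i l =
      (if i = j then if l + k = 0 then (1 / (l : RatFunc ℂ)) * qint l ^ 2 else 0 else 0)
        • (1 : A) := by
  have : CharZero (RatFunc ℂ) :=
    charZero_of_injective_algebraMap (algebraMap ℂ (RatFunc ℂ)).injective
  have hlK : ((l : RatFunc ℂ)) ≠ 0 := Int.cast_ne_zero.mpr hl
  have hq1 : qint l ≠ 0 := qint_ne_zero hl
  have hQ : qint (((n:ℤ) + 1) * l) ≠ 0 :=
    qint_ne_zero (mul_ne_zero (by positivity) hl)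
  simp only [astar]
  rw [Finset.sum_mul, Finset.mul_sum, ← Finset.sum_sub_distrib]
  set c : ℕ → RatFunc ℂ := fun p =>
    qint ((min p i : ℤ) * l) * qint (((n : ℤ) + 1 - (max p i : ℤ)) * l) /
      (qint (((n : ℤ) + 1) * l) * qint l) with hc
  have hsum : ∑ p ∈ Finset.Icc 1 n, (c p • a p l * a j k - a j k * c p • a p l)
      = ∑ p ∈ Finset.Icc 1 n,
        (c p * (if l + k = 0 then (1 / (l : RatFunc ℂ)) * qint (cartanA p j * l) * qint l else 0))
          • (1 : A) :=
    Finset.sum_congr rfl fun p hp => by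
      rw [smul_mul_assoc, mul_smul_comm, ← smul_sub, hrel p hp j hj l k hl hk, smul_smul]
  rw [hsum, ← Finset.sum_smul]
  congr 1
  by_cases hlk : l + k = 0
  · simp only [if_pos hlk]
    have hrw : ∀ p ∈ Finset.Icc 1 n,
        c p * ((1 / (l : RatFunc ℂ)) * qint (cartanA p j * l) * qint l)
          = (qint ((min p i : ℤ) * l) * qint (((n : ℤ) + 1 - (max p i : ℤ)) * l) *
              qint (cartanA p j * l)) * (1 / ((l : RatFunc ℂ) * qint (((n:ℤ)+1)*l))) := by
      intro p hp
      rw [hc]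
      field_simp
    rw [Finset.sum_congr rfl hrw, ← Finset.sum_mul, core n i j hi hj l]
    by_cases hij : i = j
    · rw [if_pos hij, if_pos hij]
      field_simp
    · rw [if_neg hij, if_neg hij]
      ring
  · simp only [if_neg hlk, mul_zero, Finset.sum_const_zero]
    simp [hlk]
end

section
/- Let n ≥ 1 and let K = ℂ(q). For all i,j ∈ {1,…,n} and every integer l, the following q-integer identity holds in K: Σ_{p=1}^{n} [min(p,i)·l] · [(n+1−max(p,i))·l] · [a_{pj}·l] = δ_{ij} · [l]² · [(n+1)·l], where a_{pj} are the entries of the Cartan matrix of type A_n. -/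
/-!
With `t = q^l` and `{m} = t^m - t^{-m}` one has `[m l] = {m} / (q - q⁻¹)`, so it suffices to prove
the identity for the numerators `{m}`, for any `t ≠ 0` in any field. Up to a scalar,
`G p = {min(p,i)} {n+1-max(p,i)}` is column `i` of the inverse of the matrix `({a_{pj}})`: since
`{a_{pj}} = {1} ((t + t⁻¹) δ_{pj} - δ_{p+1,j} - δ_{p,j+1})` and `G` vanishes at `0` and `n+1`,
the sum is `{1}` times the second difference `(t + t⁻¹) G j - G (j-1) - G (j+1)`. Off the diagonal,
`G` is near `j` a multiple of `p ↦ {p}` or of `p ↦ {n+1-p}`, both solutions of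
`{a-1} + {a+1} = (t + t⁻¹) {a}`; on the diagonal, `(t + t⁻¹) {a} {b} - {a-1} {b} - {a} {b-1} = {1} {a+b}`.
-/

open Finset

section
variable {K : Type*} [Field K]

/-- Kept undivided by `t - t⁻¹`, which vanishes at `t = ±1` (e.g. for `l = 0`). -/
def qNum (t : K) (m : ℤ) : K := t ^ m - t ^ (-m)

@[simp]
lemma qNum_zero (t : K) : qNum t 0 = 0 := by simp [qNum]

lemma qNum_neg (t : K) (m : ℤ) : qNum t (-m) = -qNum t m := by simp [qNum]

lemma qNum_two (t : K) : qNum t 2 = (t + t⁻¹) * qNum t 1 := by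
  simp only [qNum, zpow_neg, zpow_ofNat]; ring

variable {t : K}

lemma qNum_sub_one_add_qNum_add_one (ht : t ≠ 0) (a : ℤ) :
    qNum t (a - 1) + qNum t (a + 1) = (t + t⁻¹) * qNum t a := by
  simp only [qNum, neg_sub, neg_add, zpow_sub₀ ht, zpow_add₀ ht, zpow_neg, zpow_one]; ring

lemma qNum_second_difference_mul (ht : t ≠ 0) (a b : ℤ) :
    (t + t⁻¹) * qNum t a * qNum t b - qNum t (a - 1) * qNum t b - qNum t a * qNum t (b - 1) =
      qNum t 1 * qNum t (a + b) := by
  simp only [qNum, neg_sub, neg_add, zpow_sub₀ ht, zpow_add₀ ht, zpow_neg, zpow_one]; ring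

lemma sum_mul_qNum_cartanA (t : K) (F : ℤ → K) {n j : ℕ} (hF₀ : F 0 = 0)
    (hFn : F (n + 1) = 0) (hj : j ∈ Icc 1 n) :
    ∑ p ∈ Icc 1 n, F p * qNum t (cartanA p j) =
      qNum t 1 * ((t + t⁻¹) * F j - F (j - 1) - F (j + 1)) := by
  rw [mem_Icc] at hj
  have hext : ∑ p ∈ Icc 1 n, F p * qNum t (cartanA p j) =
      ∑ p ∈ Icc 0 (n + 1), F p * qNum t (cartanA p j) := by
    refine sum_subset (Icc_subset_Icc (Nat.zero_le 1) (Nat.le_succ n)) fun p hp hp' => ?_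
    simp only [mem_Icc] at hp hp'
    obtain rfl | rfl : p = 0 ∨ p = n + 1 := by omega
    · simp [hF₀]
    · simp [hFn]
  have hsupp : ∑ p ∈ {j - 1, j, j + 1}, F p * qNum t (cartanA p j) =
      ∑ p ∈ Icc 0 (n + 1), F p * qNum t (cartanA p j) := by
    refine sum_subset (fun p hp => ?_) fun p _ hp => ?_
    · simp only [mem_insert, mem_singleton] at hp
      simp only [mem_Icc]
      omega
    · simp only [mem_insert, mem_singleton, not_or] at hp
      rw [cartanA, if_neg hp.2.1, if_neg (by omega), qNum_zero, mul_zero]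
  have hpred : cartanA (j - 1) j = -1 := by rw [cartanA, if_neg (by omega), if_pos (by omega)]
  have hself : cartanA j j = 2 := if_pos rfl
  have hsucc : cartanA (j + 1) j = -1 := by rw [cartanA, if_neg (by omega), if_pos (by omega)]
  rw [hext, ← hsupp, sum_insert (by simp; omega), sum_insert (by simp), sum_singleton,
    hpred, hself, hsucc, qNum_neg, qNum_two]
  push_cast [hj.1]
  ring

def cartanInvNum (t : K) (n i p : ℤ) : K := qNum t (min p i) * qNum t (n + 1 - max p i)

lemma cartanInvNum_of_le (t : K) (n : ℤ) {i p : ℤ} (h : p ≤ i) :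
    cartanInvNum t n i p = qNum t p * qNum t (n + 1 - i) := by
  rw [cartanInvNum, min_eq_left h, max_eq_right h]

lemma cartanInvNum_of_ge (t : K) (n : ℤ) {i p : ℤ} (h : i ≤ p) :
    cartanInvNum t n i p = qNum t i * qNum t (n + 1 - p) := by
  rw [cartanInvNum, min_eq_right h, max_eq_left h]

lemma cartanInvNum_second_difference (ht : t ≠ 0) (n i j : ℤ) :
    (t + t⁻¹) * cartanInvNum t n i j - cartanInvNum t n i (j - 1) - cartanInvNum t n i (j + 1) =
      if i = j then qNum t 1 * qNum t (n + 1) else 0 := by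
  rcases lt_trichotomy j i with hji | rfl | hij
  · rw [if_neg hji.ne', cartanInvNum_of_le t n hji.le, cartanInvNum_of_le t n (by omega),
      cartanInvNum_of_le t n (by omega : j + 1 ≤ i)]
    linear_combination -qNum t (n + 1 - i) * qNum_sub_one_add_qNum_add_one ht j
  · rw [if_pos rfl, cartanInvNum_of_le t n le_rfl, cartanInvNum_of_le t n (by omega),
      cartanInvNum_of_ge t n (by omega : j ≤ j + 1), show n + 1 - (j + 1) = n + 1 - j - 1 by ring]
    have h := qNum_second_difference_mul ht j (n + 1 - j)
    rw [add_sub_cancel] at h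
    linear_combination h
  · rw [if_neg hij.ne, cartanInvNum_of_ge t n hij.le, cartanInvNum_of_ge t n (by omega),
      cartanInvNum_of_ge t n (by omega : i ≤ j + 1), show n + 1 - (j - 1) = n + 1 - j + 1 by ring,
      show n + 1 - (j + 1) = n + 1 - j - 1 by ring]
    linear_combination -qNum t i * qNum_sub_one_add_qNum_add_one ht (n + 1 - j)

lemma sum_cartanInvNum_mul_qNum_cartanA (ht : t ≠ 0) {n i j : ℕ} (hi : i ≤ n)
    (hj : j ∈ Icc 1 n) :
    ∑ p ∈ Icc 1 n, cartanInvNum t n i p * qNum t (cartanA p j) =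
      if i = j then qNum t 1 ^ 2 * qNum t (n + 1) else 0 := by
  rw [sum_mul_qNum_cartanA t (cartanInvNum t n i) ?_ ?_ hj, cartanInvNum_second_difference ht]
  · simp only [Nat.cast_inj]
    split_ifs <;> ring
  · rw [cartanInvNum_of_le t n (Int.natCast_nonneg i), qNum_zero, zero_mul]
  · rw [cartanInvNum_of_ge t n (by omega), sub_self, qNum_zero, mul_zero]

lemma qNum_div_cartan_sum_identity (ht : t ≠ 0) (d : K) {n i j : ℕ}
    (hi : i ≤ n) (hj : j ∈ Icc 1 n) :
    ∑ p ∈ Icc 1 n, qNum t (min p i : ℤ) / d * (qNum t (n + 1 - (max p i : ℤ)) / d) *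
        (qNum t (cartanA p j) / d) =
      (if i = j then 1 else 0) * (qNum t 1 / d) ^ 2 * (qNum t (n + 1) / d) :=
  calc _ = (∑ p ∈ Icc 1 n, cartanInvNum t n i p * qNum t (cartanA p j)) / d ^ 3 := by
        rw [sum_div]
        exact sum_congr rfl fun p _ => by rw [cartanInvNum]; ring
    _ = _ := by
        rw [sum_cartanInvNum_mul_qNum_cartanA ht hi hj]
        split_ifs <;> ring

end

lemma qint_mul_s1 (m l : ℤ) :
    qint (m * l) = qNum ((RatFunc.X : RatFunc ℂ) ^ l) m / (RatFunc.X - RatFunc.X⁻¹) := by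
  rw [qint, qNum, ← zpow_mul, ← zpow_mul, mul_neg, mul_comm l m]

theorem qint_cartan_sum_identity_general
    (n : ℕ) (i : ℕ) (hi : i ∈ Finset.Icc 1 n)
    (j : ℕ) (hj : j ∈ Finset.Icc 1 n) (l : ℤ) :
    ∑ p ∈ Finset.Icc 1 n,
        qint ((min p i : ℤ) * l) * qint (((n : ℤ) + 1 - (max p i : ℤ)) * l) *
          qint (cartanA p j * l) =
      (if i = j then 1 else 0) * qint l ^ 2 * qint (((n : ℤ) + 1) * l) := by
  have hl : qint l = qNum ((RatFunc.X : RatFunc ℂ) ^ l) 1 / (RatFunc.X - RatFunc.X⁻¹) := by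
    simpa using qint_mul_s1 1 l
  rw [hl]
  simp_rw [qint_mul_s1]
  exact qNum_div_cartan_sum_identity (zpow_ne_zero l RatFunc.X_ne_zero) _ (mem_Icc.1 hi).2 hj

theorem qint_cartan_sum_identity
    (n : ℕ) (hn : 1 ≤ n) (i : ℕ) (hi : i ∈ Finset.Icc 1 n)
    (j : ℕ) (hj : j ∈ Finset.Icc 1 n) (l : ℤ) :
    ∑ p ∈ Finset.Icc 1 n,
        qint ((min p i : ℤ) * l) * qint (((n : ℤ) + 1 - (max p i : ℤ)) * l) *
          qint (cartanA p j * l) =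
      (if i = j then 1 else 0) * qint l ^ 2 * qint (((n : ℤ) + 1) * l) :=
  qint_cartan_sum_identity_general n i hi j hj l
end
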